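/- arXiv:1908.01655 — 3 statements merged into one kernel-verified Lean document; each statement's English description precedes it below -/
import Mathlib

section
/- The function ω₀ on S₃ (identified with ℤ₃ ⋊ ℤ₂ via (x,y) ↦ (123)^x (13)^y) defined by ω₀((x₁,y₁),(x₂,y₂),(x₃,y₃)) = α(x₁, (-1)^{y₁} x₂, (-1)^{y₁+y₂} x₃) · (-1)^{y₁ y₂ y₃}, where α(a,b,c) = exp(2πi (a + b - [a+b]₃) c / 9), is a 3-cocycle on S₃ with values in ℂ^×, i.e., it satisfies dω₀ = 1. -/
/-- α(a,b,c) = exp(2πi (a + b - [a+b]₃) c / 9) -/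
noncomputable def alphaFun (a b c : ℤ) : ℂ :=
  Complex.exp (2 * (Real.pi : ℂ) * Complex.I * (((a + b - (a + b) % 3) * c : ℤ) : ℂ) / 9)

/-- ω₀ on S₃ identified with {0,1,2} × {0,1}. -/
noncomputable def omega0 (p₁ p₂ p₃ : ℤ × ℕ) : ℂ :=
  alphaFun p₁.1 ((-1) ^ p₁.2 * p₂.1) ((-1) ^ (p₁.2 + p₂.2) * p₃.1) *
    (-1 : ℂ) ^ (p₁.2 * p₂.2 * p₃.2)

/-- group law of S₃ ≅ ℤ₃ ⋊ ℤ₂ in coordinates -/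
def s3mul (p q : ℤ × ℕ) : ℤ × ℕ := ((p.1 + (-1) ^ p.2 * q.1) % 3, (p.2 + q.2) % 2)

/-- membership in the coordinate model {0,1,2} × {0,1} of S₃ -/
def inS3 (p : ℤ × ℕ) : Prop := 0 ≤ p.1 ∧ p.1 < 3 ∧ p.2 < 2

/-- `Eexp n = exp(2πi n / 9)`, a ninth root of unity. -/
noncomputable def Eexp (n : ℤ) : ℂ :=
  Complex.exp (2 * (Real.pi : ℂ) * Complex.I * (n : ℂ) / 9)

lemma Eexp_mul (m n : ℤ) : Eexp m * Eexp n = Eexp (m + n) := by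
  rw [Eexp, Eexp, Eexp, ← Complex.exp_add]; congr 1; push_cast; ring

lemma Eexp_inv (n : ℤ) : (Eexp n)⁻¹ = Eexp (-n) := by
  rw [Eexp, Eexp, ← Complex.exp_neg]; congr 1; push_cast; ring

lemma Eexp_nine (k : ℤ) : Eexp (9 * k) = 1 := by
  rw [Eexp]
  have := Complex.exp_int_mul_two_pi_mul_I k
  rw [← this]; congr 1; push_cast; ring

lemma Eexp_one_of (n : ℤ) (h : n % 9 = 0) : Eexp n = 1 := by
  obtain ⟨k, rfl⟩ := Int.dvd_of_emod_eq_zero h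
  exact Eexp_nine k

lemma neg_one_pow_inv (e : ℕ) : ((-1 : ℂ) ^ e)⁻¹ = (-1) ^ e := by
  rw [← inv_pow, inv_neg, inv_one]

lemma key (n₁ n₂ n₃ n₄ n₅ : ℤ) (e₁ e₂ e₃ e₄ e₅ : ℕ)
    (hn : (n₁ - n₂ + n₃ - n₄ + n₅) % 9 = 0)
    (he : (e₁ + e₂ + e₃ + e₄ + e₅) % 2 = 0) :
    Eexp n₁ * (-1 : ℂ) ^ e₁ * (Eexp n₂ * (-1 : ℂ) ^ e₂)⁻¹ *
      (Eexp n₃ * (-1 : ℂ) ^ e₃) * (Eexp n₄ * (-1 : ℂ) ^ e₄)⁻¹ *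
      (Eexp n₅ * (-1 : ℂ) ^ e₅) = 1 := by
  rw [mul_inv, mul_inv, neg_one_pow_inv, neg_one_pow_inv, Eexp_inv, Eexp_inv]
  have hsign : (-1 : ℂ) ^ e₁ * (-1) ^ e₂ * (-1) ^ e₃ * (-1) ^ e₄ * (-1) ^ e₅
      = (-1) ^ (e₁ + e₂ + e₃ + e₄ + e₅) := by rw [← pow_add, ← pow_add, ← pow_add, ← pow_add]
  have hE : Eexp n₁ * Eexp (-n₂) * Eexp n₃ * Eexp (-n₄) * Eexp n₅
      = Eexp (n₁ - n₂ + n₃ - n₄ + n₅) := by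
    rw [Eexp_mul, Eexp_mul, Eexp_mul, Eexp_mul]; ring_nf
  calc Eexp n₁ * (-1:ℂ) ^ e₁ * (Eexp (-n₂) * (-1:ℂ) ^ e₂) * (Eexp n₃ * (-1:ℂ) ^ e₃) *
        (Eexp (-n₄) * (-1:ℂ) ^ e₄) * (Eexp n₅ * (-1:ℂ) ^ e₅)
      = (Eexp n₁ * Eexp (-n₂) * Eexp n₃ * Eexp (-n₄) * Eexp n₅) *
        ((-1:ℂ) ^ e₁ * (-1) ^ e₂ * (-1) ^ e₃ * (-1) ^ e₄ * (-1) ^ e₅) := by ring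
    _ = 1 := by
        rw [hE, hsign, Eexp_one_of _ hn, (Nat.even_iff.mpr he).neg_one_pow, one_mul]

lemma alphaFun_eq (a b c : ℤ) : alphaFun a b c = Eexp ((a + b - (a + b) % 3) * c) := rfl

lemma omega0_eq (p q r : ℤ × ℕ) :
    omega0 p q r = Eexp ((p.1 + (-1) ^ p.2 * q.1 - (p.1 + (-1) ^ p.2 * q.1) % 3) *
      ((-1) ^ (p.2 + q.2) * r.1)) * (-1 : ℂ) ^ (p.2 * q.2 * r.2) := rfl

/-- ω₀ is a 3-cocycle: dω₀ = 1. -/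
theorem omega0_is_cocycle (g₀ g₁ g₂ g₃ : ℤ × ℕ)
    (h₀ : inS3 g₀) (h₁ : inS3 g₁) (h₂ : inS3 g₂) (h₃ : inS3 g₃) :
    omega0 g₁ g₂ g₃ * (omega0 (s3mul g₀ g₁) g₂ g₃)⁻¹ * omega0 g₀ (s3mul g₁ g₂) g₃ *
      (omega0 g₀ g₁ (s3mul g₂ g₃))⁻¹ * omega0 g₀ g₁ g₂ = 1 := by
  obtain ⟨a₀, b₀⟩ := g₀
  obtain ⟨a₁, b₁⟩ := g₁
  obtain ⟨a₂, b₂⟩ := g₂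
  obtain ⟨a₃, b₃⟩ := g₃
  obtain ⟨ha₀, ha₀', hb₀⟩ := h₀
  obtain ⟨ha₁, ha₁', hb₁⟩ := h₁
  obtain ⟨ha₂, ha₂', hb₂⟩ := h₂
  obtain ⟨ha₃, ha₃', hb₃⟩ := h₃
  simp only [omega0_eq, s3mul]
  apply key
  · interval_cases a₀ <;> interval_cases a₁ <;> interval_cases a₂ <;> interval_cases a₃ <;>
      interval_cases b₀ <;> interval_cases b₁ <;> interval_cases b₂ <;> interval_cases b₃ <;>
      decide
  · interval_cases b₀ <;> interval_cases b₁ <;> interval_cases b₂ <;> interval_cases b₃ <;> decide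
end

section
/- Let H = ⟨(1234)⟩ ≤ S₄ and S₃ the stabilizer of 4. Define f: S₄ → {±1} by f(σh) = f₀(h)(-1)^{ε(σ)ε(h)} for σ ∈ S₃, h ∈ H (using the unique factorization S₄ = S₃H), where f₀((1234)^z) = 1 for z ∈ {0,1} and -1 for z ∈ {2,3}, and sgn(g) = (-1)^{ε(g)}. Then f(gh) = f(g)f(h)(-1)^{ε(g)ε(h)} for all g ∈ S₄ and h ∈ H. -/
/-!
Since `H` is transitive on `{1,2,3,4}`, every `g` is `σh'` with `σ ∈ S₃`, `h' ∈ H`, and then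
`gh = σ(h'h)`. As `ε` is additive mod 2, the factors `(-1)^{ε(σ)·}` on both sides cancel, and
the claim reduces to `f₀(h'h) = f₀(h')f₀(h)(-1)^{ε(h')ε(h)}` on `H ≅ ℤ/4`, a finite check.
-/

open Equiv

abbrev S4 := Equiv.Perm (Fin 4)

/-- the 4-cycle (1234), zero-indexed as (0 1 2 3) -/
def fourCycle : S4 := Equiv.swap 0 1 * Equiv.swap 1 2 * Equiv.swap 2 3

/-- H = ⟨(1234)⟩ ≤ S₄. -/
def Hsub : Subgroup S4 := Subgroup.zpowers fourCycle

/-- The copy of S₃ inside S₄ as the stabilizer of the last point. -/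
def S3sub : Subgroup S4 := MulAction.stabilizer S4 (3 : Fin 4)

/-- ε(g) ∈ {0,1} defined by sgn(g) = (-1)^{ε(g)}. -/
def eps (g : S4) : ℕ := if Equiv.Perm.sign g = 1 then 0 else 1

/-- f₀((1234)^z) = 1 for z = 0,1 and -1 for z = 2,3, as a function on H. -/
def f0 (g : S4) : ℤ := if g = 1 ∨ g = fourCycle then 1 else -1

theorem MulAction.exists_mem_stabilizer_mul_eq {G X : Type*} [Group G] [MulAction G X]
    {H : Subgroup G} {x : X} (hH : ∀ y : X, ∃ h ∈ H, h • y = x) (g : G) :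
    ∃ σ ∈ stabilizer G x, ∃ h ∈ H, σ * h = g := by
  obtain ⟨h, hh, hx⟩ := hH (g⁻¹ • x)
  refine ⟨g * h⁻¹, ?_, h, hh, inv_mul_cancel_right g h⟩
  rw [mem_stabilizer_iff, mul_smul, inv_smul_eq_iff.mpr hx.symm, smul_inv_smul]

theorem orderOf_fourCycle : orderOf fourCycle = 4 :=
  orderOf_eq_prime_pow (p := 2) (n := 1) (by decide) (by decide)

theorem mem_Hsub_iff {h : S4} : h ∈ Hsub ↔ ∃ k < 4, fourCycle ^ k = h := by
  rw [Hsub, mem_zpowers_iff_mem_range_orderOf, orderOf_fourCycle]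
  simp

theorem exists_mem_Hsub_apply_eq_three (y : Fin 4) : ∃ h ∈ Hsub, h • y = 3 := by
  have reach_three : ∀ y : Fin 4, ∃ k : Fin 4, (fourCycle ^ (k : ℕ)) y = 3 := by decide
  obtain ⟨k, hk⟩ := reach_three y
  exact ⟨_, mem_Hsub_iff.mpr ⟨k, k.isLt, rfl⟩, hk⟩

theorem neg_one_pow_eps (g : S4) : (-1 : ℤ) ^ eps g = Perm.sign g := by
  unfold eps
  rcases Int.units_eq_one_or (Perm.sign g) with h | h <;> simp [h]

theorem neg_one_pow_eps_mul_mul (a b : S4) (n : ℕ) :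
    (-1 : ℤ) ^ (eps (a * b) * n) = (-1) ^ (eps a * n) * (-1) ^ (eps b * n) := by
  simp only [pow_mul, neg_one_pow_eps, Perm.sign_mul, Units.val_mul, mul_pow]

theorem f0_mul {a b : S4} (ha : a ∈ Hsub) (hb : b ∈ Hsub) :
    f0 (a * b) = f0 a * f0 b * (-1) ^ (eps a * eps b) := by
  have table : ∀ k l : Fin 4, f0 (fourCycle ^ (k : ℕ) * fourCycle ^ (l : ℕ)) =
      f0 (fourCycle ^ (k : ℕ)) * f0 (fourCycle ^ (l : ℕ)) *
        (-1) ^ (eps (fourCycle ^ (k : ℕ)) * eps (fourCycle ^ (l : ℕ))) := by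
    decide
  obtain ⟨k, hk, rfl⟩ := mem_Hsub_iff.mp ha
  obtain ⟨l, hl, rfl⟩ := mem_Hsub_iff.mp hb
  exact table ⟨k, hk⟩ ⟨l, hl⟩

/-- If f : S₄ → {±1} is defined by f(σh) = f₀(h)(-1)^{ε(σ)ε(h)} via the unique
factorization S₄ = S₃·H, then f(gh) = f(g)f(h)(-1)^{ε(g)ε(h)} for all g ∈ S₄, h ∈ H. -/
theorem f_twisted_hom (f : S4 → ℤ)
    (hdef : ∀ σ ∈ S3sub, ∀ h ∈ Hsub, f (σ * h) = f0 h * (-1) ^ (eps σ * eps h)) :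
    ∀ g : S4, ∀ h ∈ Hsub, f (g * h) = f g * f h * (-1) ^ (eps g * eps h) := by
  intro g h hh
  obtain ⟨σ, hσ, h', hh', rfl⟩ :=
    MulAction.exists_mem_stabilizer_mul_eq exists_mem_Hsub_apply_eq_three g
  have hf_H : f h = f0 h := by simpa [eps] using hdef 1 (one_mem _) h hh
  rw [mul_assoc, hdef σ hσ _ (mul_mem hh' hh), hdef σ hσ h' hh', hf_H, f0_mul hh' hh]
  rw [mul_comm (eps σ), neg_one_pow_eps_mul_mul, neg_one_pow_eps_mul_mul]
  ring
end

section
/- Let Gₙ = (Vₙ ⊕ Vₙ) ⋊ S₄ where Vₙ = 𝔽₂^{n-1} and S₄ acts through the retraction π: S₄ → S₃ and the S₃-action (12)·(v,w)=(w,v), (13)·(v,w)=(v+w,w), (123)·(v,w)=(v+w,v). Let Hₙ = (Vₙ ⊕ {0})·⟨(1234)⟩ and Kₙ = ({0} ⊕ Vₙ)·{e, (12)(34)}. Then: Hₙ ≅ ℤ₂^{n-1} × ℤ₄, Kₙ ≅ ℤ₂ⁿ is a subgroup of Gₙ, the normalizer of Hₙ in Gₙ is Hₙ ⋊ Kₙ,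 and Gₙ = Hₙ(123)Hₙ ⊔ ⊔_{k ∈ Kₙ} Hₙ k Hₙ is a disjoint double coset decomposition (with Hₙ ∩ (123)Hₙ(123)^{-1} = {e}, so |Hₙ(123)Hₙ| = 2^{2n+2}). -/
open Equiv

/-- the 3-cycle (123), zero-indexed as (0 1 2) -/
def threeCycle : S4 := Equiv.swap 0 1 * Equiv.swap 1 2

/-- γ₁ = (12)(34), zero-indexed -/
def gamma1 : S4 := Equiv.swap 0 1 * Equiv.swap 2 3

/-- N = {e, (12)(34), (13)(24), (14)(23)} (zero-indexed), as a set. -/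
def NSet : Set S4 := {1, Equiv.swap 0 1 * Equiv.swap 2 3, Equiv.swap 0 2 * Equiv.swap 1 3,
  Equiv.swap 0 3 * Equiv.swap 1 2}

/-- Vₙ = 𝔽₂^{n-1} -/
abbrev V (n : ℕ) := Fin (n - 1) → ZMod 2

/-- Vₙ ⊕ Vₙ, written multiplicatively so that S₄ can act by automorphisms. -/
abbrev W (n : ℕ) := Multiplicative (V n × V n)

/-- the double coset H g H of a subgroup -/
def dcoset {G : Type*} [Group G] (H : Subgroup G) (g : G) : Set G :=
  {x | ∃ h₁ ∈ H, ∃ h₂ ∈ H, x = h₁ * g * h₂}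

/-!
Everything is read off the projection `Gₙ → S₄`, which maps `Hₙ` onto `C₄ = ⟨(1234)⟩` and `Kₙ`
onto `⟨(12)(34)⟩`. In `S₄` the normalizer of `C₄` is the dihedral group `D₈ = C₄⟨(12)(34)⟩`, and
every element outside `D₈` lies in `C₄(123)C₄`. Elements of `D₈` act on `Vₙ ⊕ Vₙ` through
`⟨(13)⟩`, so they preserve the second coordinate: hence the preimage of `D₈` normalizes `Hₙ`
and equals `HₙKₙ`, and `HₙkHₙ = Hₙk` for `k ∈ Kₙ`. The remaining elements form the single double
coset `Hₙ(123)Hₙ`, because `(123)` sends `(v, 0)` to `(v, v)`; together with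
`C₄ ∩ (123)C₄(123)⁻¹ = 1` this also gives `Hₙ ∩ (123)Hₙ(123)⁻¹ = 1`, so `|Hₙ(123)Hₙ| = |Hₙ|²`.
-/

open SemidirectProduct Multiplicative Subgroup

section DoubleCoset

variable {G : Type*} [Group G] {H : Subgroup G}

theorem mul_mem_dcoset {g x h₁ h₂ : G} (h₁_mem : h₁ ∈ H) (hx : x ∈ dcoset H g)
    (h₂_mem : h₂ ∈ H) : h₁ * x * h₂ ∈ dcoset H g := by
  obtain ⟨a, ha, b, hb, rfl⟩ := hx
  exact ⟨h₁ * a, mul_mem h₁_mem ha, b * h₂, mul_mem hb h₂_mem, by group⟩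

theorem mem_iff_of_mem_dcoset {M : Subgroup G} (hHM : H ≤ M) {g x : G}
    (hx : x ∈ dcoset H g) : x ∈ M ↔ g ∈ M := by
  obtain ⟨a, ha, b, hb, rfl⟩ := hx
  rw [mul_mem_cancel_right (hHM hb), mul_mem_cancel_left (hHM ha)]

theorem dcoset_eq_of_mem_normalizer {k : G} (hk : k ∈ normalizer (H : Set G)) :
    dcoset H k = {x | x * k⁻¹ ∈ H} := by
  ext x
  constructor
  · rintro ⟨a, ha, b, hb, rfl⟩
    have hkb : k * b * k⁻¹ ∈ H := (mem_normalizer_iff.1 hk b).1 hb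
    show a * k * b * k⁻¹ ∈ H
    simpa only [mul_assoc] using mul_mem ha hkb
  · intro hx
    exact ⟨x * k⁻¹, hx, 1, one_mem H, by group⟩

theorem ncard_dcoset {g : G}
    (hg : (H : Set G) ∩ (fun x => g * x * g⁻¹) '' H = {1}) :
    (dcoset H g).ncard = Nat.card H ^ 2 := by
  have hrange : dcoset H g = Set.range fun p : H × H => (p.1 : G) * g * p.2 := by
    ext x
    constructor
    · rintro ⟨a, ha, b, hb, rfl⟩
      exact ⟨(⟨a, ha⟩, ⟨b, hb⟩), rfl⟩
    · rintro ⟨⟨a, b⟩, rfl⟩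
      exact ⟨a, a.2, b, b.2, rfl⟩
  have hinj : Function.Injective fun p : H × H => (p.1 : G) * g * p.2 := by
    rintro ⟨a, b⟩ ⟨a', b'⟩ (h : (a : G) * g * b = a' * g * b')
    have hconj : (a' : G)⁻¹ * a = g * (b' * (b : G)⁻¹) * g⁻¹ := by
      have ha : (a : G) = a' * g * b' * (b : G)⁻¹ * g⁻¹ := by
        rw [← h]
        group
      rw [ha]
      group
    have hmem : (a' : G)⁻¹ * a ∈ (H : Set G) ∩ (fun x => g * x * g⁻¹) '' H :=
      ⟨mul_mem (inv_mem a'.2) a.2, _, mul_mem b'.2 (inv_mem b.2), hconj.symm⟩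
    rw [hg, Set.mem_singleton_iff, inv_mul_eq_one] at hmem
    have hb : (b : G) = b' := by
      simp only [← hmem] at h
      exact mul_left_cancel h
    exact Prod.ext (Subtype.ext hmem.symm) (Subtype.ext hb)
  rw [hrange, ← Nat.card_coe_set_eq, Nat.card_range_of_injective hinj, Nat.card_prod, sq]

end DoubleCoset

theorem mem_zpowers_iff_exists_fin {G : Type*} [Group G] [Finite G] {g y : G} {k : ℕ}
    (hg : orderOf g = k) : y ∈ zpowers g ↔ ∃ j : Fin k, g ^ (j : ℕ) = y := by
  classical
  rw [mem_zpowers_iff_mem_range_orderOf, hg, Finset.mem_image]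
  simp only [Finset.mem_range]
  exact ⟨fun ⟨j, hj, h⟩ => ⟨⟨j, hj⟩, h⟩, fun ⟨j, h⟩ => ⟨j, j.2, h⟩⟩

namespace SemidirectProduct

variable {N G : Type*} [Group N] [Group G] {φ : G →* MulAut N} {A : Subgroup N} {B : Subgroup G}

theorem mem_map_inl_sup_map_inr_iff (hAB : ∀ b ∈ B, ∀ a ∈ A, φ b a ∈ A) {x : N ⋊[φ] G} :
    x ∈ A.map inl ⊔ B.map inr ↔ x.left ∈ A ∧ x.right ∈ B := by
  let AB : Subgroup (N ⋊[φ] G) :=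
    { carrier := {x | x.left ∈ A ∧ x.right ∈ B}
      mul_mem' := fun hx hy => ⟨mul_mem hx.1 (hAB _ hx.2 _ hy.1), mul_mem hx.2 hy.2⟩
      one_mem' := ⟨one_mem A, one_mem B⟩
      inv_mem' := fun hx => ⟨hAB _ (inv_mem hx.2) _ (inv_mem hx.1), inv_mem hx.2⟩ }
  constructor
  · refine fun hx => (sup_le ?_ ?_ : _ ≤ AB) hx
    · rintro _ ⟨a, ha, rfl⟩
      exact ⟨ha, one_mem B⟩
    · rintro _ ⟨b, hb, rfl⟩
      exact ⟨one_mem A, hb⟩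
  · rintro ⟨ha, hb⟩
    rw [← inl_left_mul_inr_right x]
    exact mul_mem (mem_sup_left (mem_map_of_mem _ ha)) (mem_sup_right (mem_map_of_mem _ hb))

theorem map_rightHom_map_inl_sup_map_inr :
    (A.map inl ⊔ B.map inr).map (rightHom (φ := φ)) = B := by
  rw [Subgroup.map_sup, map_map, map_map, rightHom_comp_inl, rightHom_comp_inr, map_one_eq_bot,
    map_id, bot_sup_eq]

def mapInlSupMapInrEquivProd (hAB : ∀ b ∈ B, ∀ a ∈ A, φ b a = a) :
    ↥(A.map (inl (φ := φ)) ⊔ B.map inr) ≃* A × B :=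
  have hmem := fun {x : N ⋊[φ] G} =>
    mem_map_inl_sup_map_inr_iff (fun b hb a ha => (hAB b hb a ha).symm ▸ ha) (x := x)
  { toFun := fun x => (⟨x.1.left, (hmem.1 x.2).1⟩, ⟨x.1.right, (hmem.1 x.2).2⟩)
    invFun := fun p => ⟨⟨p.1, p.2⟩, hmem.2 ⟨p.1.2, p.2.2⟩⟩
    left_inv := fun _ => rfl
    right_inv := fun _ => rfl
    map_mul' := fun x y => by
      ext
      · simp [hAB _ (hmem.1 x.2).2 _ (hmem.1 y.2).1]
      · simp }

end SemidirectProduct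

namespace S4

def C4 : Subgroup S4 := zpowers fourCycle

def C2 : Subgroup S4 := zpowers gamma1

def D8 : Subgroup S4 := C4 ⊔ C2

theorem orderOf_fourCycle : orderOf fourCycle = 4 :=
  orderOf_eq_prime_pow (p := 2) (n := 1) (by decide) (by decide)

theorem orderOf_gamma1 : orderOf gamma1 = 2 :=
  orderOf_eq_prime (by decide) (by decide)

theorem mem_C4_iff {s : S4} : s ∈ C4 ↔ ∃ j : Fin 4, fourCycle ^ (j : ℕ) = s :=
  mem_zpowers_iff_exists_fin orderOf_fourCycle

theorem mem_C2_iff {s : S4} : s ∈ C2 ↔ s = 1 ∨ s = gamma1 := by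
  rw [C2, mem_zpowers_iff_exists_fin orderOf_gamma1, Fin.exists_fin_two]
  simp only [Fin.val_zero, Fin.val_one, pow_zero, pow_one, eq_comm]

theorem C2_le_normalizer_C4 : C2 ≤ normalizer (C4 : Set S4) := by
  rw [C2, zpowers_le, mem_normalizer_iff]
  simp only [mem_C4_iff]
  decide

theorem C4_inf_C2 : C4 ⊓ C2 = ⊥ := by
  have h : ∀ s ∈ C4, s ∈ C2 → s = 1 := by
    simp only [mem_C4_iff, mem_C2_iff]
    decide
  exact (Subgroup.eq_bot_iff_forall _).2 fun s hs => h s hs.1 hs.2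

theorem mem_D8_iff {s : S4} :
    s ∈ D8 ↔ ∃ j : Fin 4, fourCycle ^ (j : ℕ) = s ∨ fourCycle ^ (j : ℕ) * gamma1 = s := by
  rw [D8, ← SetLike.mem_coe, coe_mul_of_right_le_normalizer_left _ _ C2_le_normalizer_C4,
    Set.mem_mul]
  simp only [SetLike.mem_coe, mem_C4_iff, mem_C2_iff]
  constructor
  · rintro ⟨_, ⟨j, rfl⟩, _, rfl | rfl, rfl⟩
    exacts [⟨j, Or.inl (mul_one _).symm⟩, ⟨j, Or.inr rfl⟩]
  · rintro ⟨j, rfl | rfl⟩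
    exacts [⟨_, ⟨j, rfl⟩, 1, Or.inl rfl, mul_one _⟩, ⟨_, ⟨j, rfl⟩, gamma1, Or.inr rfl, rfl⟩]

theorem normalizer_C4 : normalizer (C4 : Set S4) = D8 := by
  refine le_antisymm (fun s hs => ?_) (sup_le le_normalizer C2_le_normalizer_C4)
  have h : ∀ s : S4, s * fourCycle * s⁻¹ ∈ C4 → s ∈ D8 := by
    simp only [mem_C4_iff, mem_D8_iff]
    decide
  exact h s ((mem_normalizer_iff.1 hs _).1 (mem_zpowers _))

theorem threeCycle_notMem_D8 : threeCycle ∉ D8 := by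
  rw [mem_D8_iff]
  decide

theorem eq_one_of_mem_C4_of_conj_threeCycle_mem_C4 {c : S4} (hc : c ∈ C4)
    (hconj : threeCycle * c * threeCycle⁻¹ ∈ C4) : c = 1 := by
  have h : ∀ c ∈ C4, threeCycle * c * threeCycle⁻¹ ∈ C4 → c = 1 := by
    simp only [mem_C4_iff]
    decide
  exact h c hc hconj

theorem exists_eq_mul_threeCycle_mul_of_notMem_D8 {s : S4} (hs : s ∉ D8) :
    ∃ c₁ ∈ C4, ∃ c₂ ∈ C4, s = c₁ * threeCycle * c₂ := by
  have h : ∀ s : S4, s ∉ D8 → ∃ c₁ ∈ C4, ∃ c₂ ∈ C4, s = c₁ * threeCycle * c₂ := by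
    simp only [mem_C4_iff, mem_D8_iff]
    decide
  exact h s hs

noncomputable def C4MulEquiv : C4 ≃* Multiplicative (ZMod 4) :=
  mulEquivOfCyclicCardEq (hG := isCyclic_zpowers fourCycle)
    (by rw [C4, Nat.card_zpowers, orderOf_fourCycle, Nat.card_eq_fintype_card]; rfl)

noncomputable def C2MulEquiv : C2 ≃* Multiplicative (ZMod 2) :=
  mulEquivOfCyclicCardEq (hG := isCyclic_zpowers gamma1)
    (by rw [C2, Nat.card_zpowers, orderOf_gamma1, Nat.card_eq_fintype_card]; rfl)

end S4

namespace Gn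

open S4

def W₁ (n : ℕ) : Subgroup (W n) := (AddMonoidHom.inl (V n) (V n)).toMultiplicative.range

def W₂ (n : ℕ) : Subgroup (W n) := (AddMonoidHom.inr (V n) (V n)).toMultiplicative.range

noncomputable def W₁Equiv (n : ℕ) : W₁ n ≃* Multiplicative (V n) :=
  (MonoidHom.ofInjective (f := (AddMonoidHom.inl (V n) (V n)).toMultiplicative)
    fun _ _ h => congrArg (fun w => (toAdd w).1) h).symm

noncomputable def W₂Equiv (n : ℕ) : W₂ n ≃* Multiplicative (V n) :=
  (MonoidHom.ofInjective (f := (AddMonoidHom.inr (V n) (V n)).toMultiplicative)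
    fun _ _ h => congrArg (fun w => (toAdd w).2) h).symm

def sndPreserving (n : ℕ) : Subgroup (MulAut (W n)) where
  carrier := {σ | ∀ u, (toAdd (σ u)).2 = (toAdd u).2}
  mul_mem' hσ hτ u := (hσ _).trans (hτ u)
  one_mem' _ := rfl
  inv_mem' {σ} hσ u := by rw [← hσ (σ⁻¹ u), MulAut.apply_inv_self]

variable {n : ℕ}

theorem mem_W₁_iff {w : W n} : w ∈ W₁ n ↔ (toAdd w).2 = 0 :=
  ⟨by rintro ⟨v, rfl⟩; rfl, fun h => ⟨ofAdd (toAdd w).1, toAdd.injective (Prod.ext rfl h.symm)⟩⟩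

theorem mem_W₂_iff {w : W n} : w ∈ W₂ n ↔ (toAdd w).1 = 0 :=
  ⟨by rintro ⟨v, rfl⟩; rfl, fun h => ⟨ofAdd (toAdd w).2, toAdd.injective (Prod.ext h.symm rfl)⟩⟩

variable {φ : S4 →* MulAut (W n)}

theorem map_gamma1_eq_one (hN : ∀ g ∈ NSet, φ g = 1) : φ gamma1 = 1 :=
  hN _ (Or.inr (Or.inl rfl))

theorem map_fourCycle_apply (hN : ∀ g ∈ NSet, φ g = 1)
    (h13 : ∀ v w : V n, φ (swap 0 2) (ofAdd (v, w)) = ofAdd (v + w, w)) (v w : V n) :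
    φ fourCycle (ofAdd (v, w)) = ofAdd (v + w, w) := by
  have hdecomp : fourCycle = (swap 0 3 * swap 1 2) * swap 0 2 := by decide
  rw [hdecomp, map_mul, hN _ (Or.inr (Or.inr (Or.inr rfl))), one_mul, h13]

theorem map_threeCycle_apply
    (h12 : ∀ v w : V n, φ (swap 0 1) (ofAdd (v, w)) = ofAdd (w, v))
    (h13 : ∀ v w : V n, φ (swap 0 2) (ofAdd (v, w)) = ofAdd (v + w, w)) (v w : V n) :
    φ threeCycle (ofAdd (v, w)) = ofAdd (v + w, v) := by
  have hdecomp : threeCycle = swap 0 2 * swap 0 1 := by decide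
  rw [hdecomp, map_mul, MulAut.mul_apply, h12, h13, add_comm]

theorem map_eq_one_of_mem_C2 (hγ : φ gamma1 = 1) {g : S4} (hg : g ∈ C2) : φ g = 1 :=
  (zpowers_le.2 (φ.mem_ker.2 hγ) hg : g ∈ φ.ker)

theorem map_apply_eq_of_mem_C4_of_mem_W₁
    (hf : ∀ v w : V n, φ fourCycle (ofAdd (v, w)) = ofAdd (v + w, w))
    {c : S4} (hc : c ∈ C4) {a : W n} (ha : a ∈ W₁ n) : φ c a = a := by
  have hfix : fourCycle ∈ (fixingSubgroup (MulAut (W n)) (W₁ n : Set (W n))).comap φ := by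
    rw [mem_comap, mem_fixingSubgroup_iff]
    rintro _ ⟨v, rfl⟩
    exact (hf _ _).trans (by simp)
  exact (mem_fixingSubgroup_iff _).1 (zpowers_le.2 hfix hc) a ha

theorem D8_le_comap_sndPreserving (hγ : φ gamma1 = 1)
    (hf : ∀ v w : V n, φ fourCycle (ofAdd (v, w)) = ofAdd (v + w, w)) :
    D8 ≤ (sndPreserving n).comap φ := by
  refine sup_le (zpowers_le.2 fun u => ?_) (zpowers_le.2 fun u => ?_)
  · exact congrArg (fun w => (toAdd w).2) (hf (toAdd u).1 (toAdd u).2)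
  · rw [hγ]
    rfl

variable (φ : S4 →* MulAut (W n)) in
def H : Subgroup (W n ⋊[φ] S4) := (W₁ n).map inl ⊔ C4.map inr

variable (φ : S4 →* MulAut (W n)) in
def K : Subgroup (W n ⋊[φ] S4) := (W₂ n).map inl ⊔ C2.map inr

theorem inl_mem_H {a : W n} (ha : a ∈ W₁ n) : inl a ∈ H φ :=
  mem_sup_left (mem_map_of_mem _ ha)

theorem inr_mem_H {c : S4} (hc : c ∈ C4) : inr c ∈ H φ :=
  mem_sup_right (mem_map_of_mem _ hc)

theorem mem_H_iff (hf : ∀ v w : V n, φ fourCycle (ofAdd (v, w)) = ofAdd (v + w, w))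
    {x : W n ⋊[φ] S4} : x ∈ H φ ↔ (toAdd x.left).2 = 0 ∧ x.right ∈ C4 := by
  rw [H, mem_map_inl_sup_map_inr_iff, mem_W₁_iff]
  intro c hc a ha
  rwa [map_apply_eq_of_mem_C4_of_mem_W₁ hf hc ha]

theorem mem_K_iff (hγ : φ gamma1 = 1) {x : W n ⋊[φ] S4} :
    x ∈ K φ ↔ (toAdd x.left).1 = 0 ∧ x.right ∈ C2 := by
  rw [K, mem_map_inl_sup_map_inr_iff, mem_W₂_iff]
  intro g hg a ha
  rwa [map_eq_one_of_mem_C2 hγ hg]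

theorem coe_H (hf : ∀ v w : V n, φ fourCycle (ofAdd (v, w)) = ofAdd (v + w, w)) :
    (H φ : Set (W n ⋊[φ] S4)) = {x | ∃ (v : V n) (z : ℤ), x =
      inl (ofAdd (v, 0)) * inr (fourCycle ^ z)} := by
  ext x
  simp only [SetLike.mem_coe, mem_H_iff hf, Set.mem_ofPred_eq, ← mk_eq_inl_mul_inr,
    SemidirectProduct.ext_iff, C4, mem_zpowers_iff]
  constructor
  · rintro ⟨hsnd, z, hz⟩
    exact ⟨(toAdd x.left).1, z, toAdd.injective (Prod.ext rfl hsnd), hz.symm⟩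
  · rintro ⟨v, z, hl, hr⟩
    exact ⟨by rw [hl]; rfl, z, hr.symm⟩

theorem coe_K (hγ : φ gamma1 = 1) :
    (K φ : Set (W n ⋊[φ] S4)) = {x | ∃ (w : V n) (k : S4), (k = 1 ∨ k = gamma1) ∧ x =
      inl (ofAdd (0, w)) * inr k} := by
  ext x
  simp only [SetLike.mem_coe, mem_K_iff hγ, Set.mem_ofPred_eq, ← mk_eq_inl_mul_inr,
    SemidirectProduct.ext_iff, mem_C2_iff]
  constructor
  · rintro ⟨hfst, hk⟩
    exact ⟨(toAdd x.left).2, x.right, hk, toAdd.injective (Prod.ext hfst rfl), rfl⟩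
  · rintro ⟨w, k, hk, hl, rfl⟩
    exact ⟨by rw [hl]; rfl, hk⟩

noncomputable def HMulEquiv (hf : ∀ v w : V n, φ fourCycle (ofAdd (v, w)) = ofAdd (v + w, w)) :
    H φ ≃* Multiplicative (V n × ZMod 4) :=
  (mapInlSupMapInrEquivProd fun _ hc _ ha => map_apply_eq_of_mem_C4_of_mem_W₁ hf hc ha).trans
    ((MulEquiv.prodCongr (W₁Equiv n) C4MulEquiv).trans (MulEquiv.prodMultiplicative _ _).symm)

noncomputable def KMulEquiv (hγ : φ gamma1 = 1) : K φ ≃* Multiplicative (V n × ZMod 2) :=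
  (mapInlSupMapInrEquivProd fun _ hg a _ => by rw [map_eq_one_of_mem_C2 hγ hg]; rfl).trans
    ((MulEquiv.prodCongr (W₂Equiv n) C2MulEquiv).trans (MulEquiv.prodMultiplicative _ _).symm)

theorem card_H (hf : ∀ v w : V n, φ fourCycle (ofAdd (v, w)) = ofAdd (v + w, w)) :
    Nat.card (H φ) = 2 ^ (n - 1) * 4 := by
  rw [Nat.card_congr (HMulEquiv hf).toEquiv, Nat.card_eq_fintype_card]
  simp

theorem map_rightHom_H : (H φ).map rightHom = C4 :=
  map_rightHom_map_inl_sup_map_inr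

theorem H_le_comap_D8 : H φ ≤ D8.comap rightHom := by
  rw [← map_le_iff_le_comap, map_rightHom_H]
  exact le_sup_left

theorem K_le_comap_D8 : K φ ≤ D8.comap rightHom := by
  rw [← map_le_iff_le_comap, K, map_rightHom_map_inl_sup_map_inr]
  exact le_sup_right

theorem H_sup_K : H φ ⊔ K φ = D8.comap rightHom := by
  refine le_antisymm (sup_le H_le_comap_D8 K_le_comap_D8) fun x hx => ?_
  have hinl : (W₁ n ⊔ W₂ n).map inl ≤ H φ ⊔ K φ := by
    rw [Subgroup.map_sup]
    exact sup_le_sup le_sup_left le_sup_left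
  have hinr : D8.map inr ≤ H φ ⊔ K φ := by
    rw [D8, Subgroup.map_sup]
    exact sup_le_sup le_sup_right le_sup_right
  have hleft : x.left ∈ W₁ n ⊔ W₂ n :=
    mem_sup.2 ⟨ofAdd ((toAdd x.left).1, 0), mem_W₁_iff.2 rfl,
      ofAdd (0, (toAdd x.left).2), mem_W₂_iff.2 rfl, toAdd.injective (by simp)⟩
  rw [← inl_left_mul_inr_right x]
  exact mul_mem (hinl (mem_map_of_mem _ hleft)) (hinr (mem_map_of_mem _ hx))

theorem conj_mem_H (hγ : φ gamma1 = 1)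
    (hf : ∀ v w : V n, φ fourCycle (ofAdd (v, w)) = ofAdd (v + w, w))
    {x : W n ⋊[φ] S4} (hx : x.right ∈ D8) {h : W n ⋊[φ] S4} (hh : h ∈ H φ) :
    x * h * x⁻¹ ∈ H φ := by
  rw [mem_H_iff hf] at hh ⊢
  have hsnd : ∀ s ∈ D8, ∀ u : W n, (toAdd (φ s u)).2 = (toAdd u).2 :=
    fun s hs => D8_le_comap_sndPreserving hγ hf hs
  have hhr : h.right ∈ D8 := le_sup_left (α := Subgroup S4) hh.2
  constructor
  · simp only [mul_left, mul_right, inv_left, toAdd_mul, Prod.snd_add, hsnd _ hx,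
      hsnd _ (mul_mem hx hhr), hsnd _ (inv_mem hx), toAdd_inv, Prod.snd_neg, hh.1]
    abel
  · rw [← normalizer_C4] at hx
    exact (mem_normalizer_iff.1 hx _).1 hh.2

theorem normalizer_H (hγ : φ gamma1 = 1)
    (hf : ∀ v w : V n, φ fourCycle (ofAdd (v, w)) = ofAdd (v + w, w)) :
    normalizer (H φ : Set (W n ⋊[φ] S4)) = D8.comap rightHom := by
  refine le_antisymm (fun x hx => ?_)
    (le_normalizer_iff.2 fun x hx h hh => conj_mem_H hγ hf hx hh)
  have hmap := le_normalizer_map (H := H φ) rightHom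
  rw [map_rightHom_H, normalizer_C4] at hmap
  exact hmap (mem_map_of_mem _ hx)

theorem K_le_normalizer_H (hγ : φ gamma1 = 1)
    (hf : ∀ v w : V n, φ fourCycle (ofAdd (v, w)) = ofAdd (v + w, w)) :
    K φ ≤ normalizer (H φ : Set (W n ⋊[φ] S4)) :=
  normalizer_H hγ hf ▸ K_le_comap_D8

theorem H_inf_K_eq_bot (hγ : φ gamma1 = 1)
    (hf : ∀ v w : V n, φ fourCycle (ofAdd (v, w)) = ofAdd (v + w, w)) :
    H φ ⊓ K φ = ⊥ := by
  refine (Subgroup.eq_bot_iff_forall _).2 fun x hx => ?_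
  obtain ⟨hxH, hxK⟩ := mem_inf.1 hx
  rw [mem_H_iff hf] at hxH
  rw [mem_K_iff hγ] at hxK
  have hright : x.right = 1 := (Subgroup.eq_bot_iff_forall _).1 C4_inf_C2 _ ⟨hxH.2, hxK.2⟩
  have hleft : x.left = 1 := toAdd.injective (Prod.ext hxK.1 hxH.1)
  exact SemidirectProduct.ext hleft hright

theorem H_inter_conj_threeCycle (hf : ∀ v w : V n, φ fourCycle (ofAdd (v, w)) = ofAdd (v + w, w))
    (hθ : ∀ v w : V n, φ threeCycle (ofAdd (v, w)) = ofAdd (v + w, v)) :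
    (H φ : Set (W n ⋊[φ] S4)) ∩ (fun x => inr threeCycle * x * (inr threeCycle)⁻¹) '' H φ
      = {1} := by
  refine Set.eq_singleton_iff_unique_mem.2 ⟨⟨one_mem _, 1, one_mem _, by simp⟩, ?_⟩
  rintro _ ⟨hx, y, hy, rfl⟩
  rw [SetLike.mem_coe, mem_H_iff hf] at hx hy
  have hyr : y.right = 1 := eq_one_of_mem_C4_of_conj_threeCycle_mem_C4 hy.2 (by simpa using hx.2)
  -- conjugation by (123) sends `(v, 0)` to `(v, v)`
  have hyl : y.left = 1 := by
    have hsnd : (toAdd (φ threeCycle y.left)).2 = 0 := by simpa [hyr] using hx.1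
    rw [← ofAdd_toAdd y.left, ← Prod.mk.eta (p := toAdd y.left), hy.1, hθ] at hsnd
    exact toAdd.injective (Prod.ext (by simpa using hsnd) hy.1)
  simp [SemidirectProduct.ext_iff, hyl, hyr]

theorem mk_threeCycle_mem_dcoset
    (hθ : ∀ v w : V n, φ threeCycle (ofAdd (v, w)) = ofAdd (v + w, v)) (w : W n) :
    (⟨w, threeCycle⟩ : W n ⋊[φ] S4) ∈ dcoset (H φ) (inr threeCycle) := by
  refine ⟨inl (ofAdd ((toAdd w).1 - (toAdd w).2, 0)), inl_mem_H (mem_W₁_iff.2 rfl),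
    inl (ofAdd ((toAdd w).2, 0)), inl_mem_H (mem_W₁_iff.2 rfl), ?_⟩
  refine SemidirectProduct.ext ?_ (by simp)
  simp only [mul_left, mul_right, left_inl, left_inr, right_inl, right_inr, map_one, mul_one,
    one_mul]
  rw [hθ]
  exact toAdd.injective (Prod.ext (by simp) (by simp))

theorem dcoset_threeCycle_inter_dcoset {k : W n ⋊[φ] S4} (hk : k ∈ K φ) :
    dcoset (H φ) (inr threeCycle) ∩ dcoset (H φ) k = ∅ := by
  refine Set.eq_empty_of_forall_notMem fun x ⟨hxt, hxk⟩ => threeCycle_notMem_D8 ?_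
  exact (mem_iff_of_mem_dcoset H_le_comap_D8 hxt).1
    ((mem_iff_of_mem_dcoset H_le_comap_D8 hxk).2 (K_le_comap_D8 hk))

theorem dcoset_inter_dcoset_of_ne (hγ : φ gamma1 = 1)
    (hf : ∀ v w : V n, φ fourCycle (ofAdd (v, w)) = ofAdd (v + w, w))
    {k₁ k₂ : W n ⋊[φ] S4} (hk₁ : k₁ ∈ K φ) (hk₂ : k₂ ∈ K φ) (hne : k₁ ≠ k₂) :
    dcoset (H φ) k₁ ∩ dcoset (H φ) k₂ = ∅ := by
  rw [dcoset_eq_of_mem_normalizer (K_le_normalizer_H hγ hf hk₁),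
    dcoset_eq_of_mem_normalizer (K_le_normalizer_H hγ hf hk₂)]
  refine Set.eq_empty_of_forall_notMem fun x ⟨hx₁, hx₂⟩ => hne ?_
  have hH : k₂ * k₁⁻¹ ∈ H φ := by
    have hx : (x * k₂⁻¹)⁻¹ * (x * k₁⁻¹) ∈ H φ := mul_mem (inv_mem hx₂) hx₁
    simpa [mul_assoc] using hx
  have hHK : k₂ * k₁⁻¹ ∈ H φ ⊓ K φ := mem_inf.2 ⟨hH, mul_mem hk₂ (inv_mem hk₁)⟩
  rw [H_inf_K_eq_bot hγ hf, mem_bot, mul_inv_eq_one] at hHK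
  exact hHK.symm

theorem dcoset_threeCycle_union_iUnion_dcoset (hγ : φ gamma1 = 1)
    (hf : ∀ v w : V n, φ fourCycle (ofAdd (v, w)) = ofAdd (v + w, w))
    (hθ : ∀ v w : V n, φ threeCycle (ofAdd (v, w)) = ofAdd (v + w, v)) :
    dcoset (H φ) (inr threeCycle) ∪ ⋃ k ∈ K φ, dcoset (H φ) k = Set.univ := by
  refine Set.eq_univ_of_forall fun x => ?_
  by_cases hx : x.right ∈ D8
  · have hHK : x ∈ (↑(H φ ⊔ K φ) : Set (W n ⋊[φ] S4)) := by
      rw [H_sup_K]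
      exact hx
    rw [coe_mul_of_right_le_normalizer_left _ _ (K_le_normalizer_H hγ hf)] at hHK
    obtain ⟨h, hh, k, hk, rfl⟩ := hHK
    exact Or.inr (Set.mem_iUnion₂.2 ⟨k, hk, h, hh, 1, one_mem _, (mul_one _).symm⟩)
  · obtain ⟨c₁, hc₁, c₂, hc₂, hx⟩ := exists_eq_mul_threeCycle_mul_of_notMem_D8 hx
    have hdecomp : x = inr c₁ * ⟨φ c₁⁻¹ x.left, threeCycle⟩ * inr c₂ := by
      refine SemidirectProduct.ext ?_ ?_
      · simp
      · simp [hx]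
    rw [hdecomp]
    exact Or.inl (mul_mem_dcoset (inr_mem_H hc₁) (mk_threeCycle_mem_dcoset hθ _) (inr_mem_H hc₂))

end Gn

open Gn S4 in
/-- Given an action φ of S₄ on Vₙ ⊕ Vₙ factoring through π : S₄ → S₃ (trivial
on the Klein four-group N, with (12)·(v,w) = (w,v) and (13)·(v,w) = (v+w,w)),
form Gₙ = (Vₙ ⊕ Vₙ) ⋊ S₄.  Let Hₙ = (Vₙ ⊕ 0)⟨(1234)⟩ and
Kₙ = (0 ⊕ Vₙ){e, (12)(34)}.  Then Hₙ ≅ ℤ₂^{n-1} × ℤ₄ and Kₙ ≅ ℤ₂ⁿ are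
subgroups of Gₙ, the normalizer of Hₙ is Hₙ ⋊ Kₙ, and
Gₙ = Hₙ(123)Hₙ ⊔ ⊔_{k ∈ Kₙ} HₙkHₙ is a disjoint double coset decomposition,
with Hₙ ∩ (123)Hₙ(123)⁻¹ = {e} and |Hₙ(123)Hₙ| = 2^{2n+2}. -/
theorem double_coset_structure_general (n : ℕ) (hn : 1 ≤ n)
    (φ : S4 →* MulAut (W n))
    (hN : ∀ g ∈ NSet, φ g = 1)
    (h12 : ∀ v w : V n, φ (Equiv.swap 0 1) (Multiplicative.ofAdd (v, w)) =
      Multiplicative.ofAdd (w, v))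
    (h13 : ∀ v w : V n, φ (Equiv.swap 0 2) (Multiplicative.ofAdd (v, w)) =
      Multiplicative.ofAdd (v + w, w)) :
    ∃ Hn Kn : Subgroup (W n ⋊[φ] S4),
      ((Hn : Set (W n ⋊[φ] S4)) =
        {x | ∃ (v : V n) (z : ℤ), x =
          SemidirectProduct.inl (Multiplicative.ofAdd (v, 0)) *
            SemidirectProduct.inr (fourCycle ^ z)}) ∧
      ((Kn : Set (W n ⋊[φ] S4)) =
        {x | ∃ (w : V n) (k : S4), (k = 1 ∨ k = gamma1) ∧ x =
          SemidirectProduct.inl (Multiplicative.ofAdd (0, w)) *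
            SemidirectProduct.inr k}) ∧
      Nonempty (Hn ≃* Multiplicative ((Fin (n - 1) → ZMod 2) × ZMod 4)) ∧
      Nonempty (Kn ≃* Multiplicative (Fin n → ZMod 2)) ∧
      Subgroup.normalizer (Hn : Set (W n ⋊[φ] S4)) = Hn ⊔ Kn ∧ Hn ⊓ Kn = ⊥ ∧
      ((Hn : Set (W n ⋊[φ] S4)) ∩
        ((fun x => SemidirectProduct.inr threeCycle * x *
          (SemidirectProduct.inr (G := S4) threeCycle)⁻¹) '' (Hn : Set (W n ⋊[φ] S4))) = {1}) ∧
      (dcoset Hn (SemidirectProduct.inr threeCycle)).ncard = 2 ^ (2 * n + 2) ∧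
      (∀ k ∈ Kn, dcoset Hn (SemidirectProduct.inr threeCycle) ∩ dcoset Hn k = ∅) ∧
      (∀ k₁ ∈ Kn, ∀ k₂ ∈ Kn, k₁ ≠ k₂ → dcoset Hn k₁ ∩ dcoset Hn k₂ = ∅) ∧
      (dcoset Hn (SemidirectProduct.inr threeCycle) ∪
        ⋃ k ∈ Kn, dcoset Hn k) = Set.univ := by
  obtain ⟨m, rfl⟩ : ∃ m, n = m + 1 := ⟨n - 1, by omega⟩
  have hγ := map_gamma1_eq_one hN
  have hf := map_fourCycle_apply hN h13
  have hθ := map_threeCycle_apply h12 h13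
  have hHt := H_inter_conj_threeCycle hf hθ
  refine ⟨H φ, K φ, coe_H hf, coe_K hγ, ⟨HMulEquiv hf⟩, ⟨(KMulEquiv hγ).trans ?_⟩,
    (normalizer_H hγ hf).trans (H_sup_K ..).symm, H_inf_K_eq_bot hγ hf, hHt, ?_,
    fun k hk => dcoset_threeCycle_inter_dcoset hk,
    fun k₁ hk₁ k₂ hk₂ => dcoset_inter_dcoset_of_ne hγ hf hk₁ hk₂,
    dcoset_threeCycle_union_iUnion_dcoset hγ hf hθ⟩
  · exact AddEquiv.toMultiplicative
      (AddEquiv.prodComm.trans (Fin.consLinearEquiv ℕ fun _ => ZMod 2).toAddEquiv)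
  · rw [ncard_dcoset hHt, card_H hf, Nat.add_sub_cancel]
    ring
end
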